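/- arXiv:0810.0812 — 6 statements merged into one kernel-verified Lean document; each statement's English description precedes it below -/
import Mathlib

section
/- The maps m := δ† and u := ε† make H a commutative †-Frobenius monoid: m is associative (m ∘ (m ⊗ id_H) = m ∘ (id_H ⊗ m)), commutative (m ∘ swap = m), has u(1) as a two-sided unit (m(u(1) ⊗ x) = x = m(x ⊗ u(1)) for all x ∈ H), and the Frobenius law (m ⊗ id_H) ∘ (id_H ⊗ δ) = δ ∘ m holds as an equality of linear maps H ⊗ H → H ⊗ H. -/
noncomputable section

open scoped TensorProduct ComplexConjugate InnerProductSpace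

open scoped TensorProduct ComplexConjugate InnerProductSpace

variable {H : Type*} [NormedAddCommGroup H] [InnerProductSpace ℂ H] [FiniteDimensional ℂ H]

namespace TensorIP

variable (H) in
/-- A basis of `H ⊗ H` built from an orthonormal basis of `H`. -/
def tb : Module.Basis (Fin (Module.finrank ℂ H) × Fin (Module.finrank ℂ H)) ℂ (H ⊗[ℂ] H) :=
  Module.Basis.tensorProduct (stdOrthonormalBasis ℂ H).toBasis (stdOrthonormalBasis ℂ H).toBasis

variable (H) in
/-- The canonical inner product space structure on `H ⊗ H`, which is determined by
`⟪a ⊗ b, c ⊗ d⟫ = ⟪a,c⟫ * ⟪b,d⟫` (see `TensorIP.inner_tmul` below). -/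
def core : InnerProductSpace.Core ℂ (H ⊗[ℂ] H) where
  inner x y := ∑ p, conj ((tb H).repr x p) * ((tb H).repr y p)
  conj_inner_symm x y := by
    simp only [map_sum, map_mul, starRingEnd_self_apply]
    exact Finset.sum_congr rfl fun p _ => by ring
  re_inner_nonneg x := by
    show 0 ≤ RCLike.re (∑ p, conj ((tb H).repr x p) * ((tb H).repr x p))
    have h : ∀ p : Fin (Module.finrank ℂ H) × Fin (Module.finrank ℂ H),
        conj ((tb H).repr x p) * ((tb H).repr x p)
          = ((Complex.normSq ((tb H).repr x p) : ℝ) : ℂ) := fun p => by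
      rw [mul_comm, Complex.mul_conj]
    simp only [h]
    rw [map_sum]
    refine Finset.sum_nonneg fun p _ => ?_
    simp [Complex.normSq_nonneg]
  add_left x y z := by
    simp only [map_add, Finsupp.add_apply]
    rw [← Finset.sum_add_distrib]
    exact Finset.sum_congr rfl fun p _ => by ring
  smul_left x y r := by
    simp only [map_smul, Finsupp.smul_apply, smul_eq_mul, map_mul, Finset.mul_sum]
    exact Finset.sum_congr rfl fun p _ => by ring
  definite x hx := by
    have hx' : ∑ p, conj ((tb H).repr x p) * ((tb H).repr x p) = 0 := hx
    have h2 : ∑ p, ((Complex.normSq ((tb H).repr x p) : ℝ) : ℂ) = 0 := by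
      rw [← hx']
      exact Finset.sum_congr rfl fun p _ => by rw [mul_comm, Complex.mul_conj]
    have h3 : ∑ p, Complex.normSq ((tb H).repr x p) = 0 := by exact_mod_cast h2
    have h4 : ∀ p ∈ Finset.univ, Complex.normSq ((tb H).repr x p) = 0 :=
      (Finset.sum_eq_zero_iff_of_nonneg fun p _ => Complex.normSq_nonneg _).mp h3
    have h5 : (tb H).repr x = 0 := by
      ext p
      exact Complex.normSq_eq_zero.mp (h4 p (Finset.mem_univ p))
    simpa using (tb H).repr.map_eq_zero_iff.mp h5

instance : NormedAddCommGroup (H ⊗[ℂ] H) :=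
  @InnerProductSpace.Core.toNormedAddCommGroup ℂ (H ⊗[ℂ] H) _ _ _ (core H)

instance : InnerProductSpace ℂ (H ⊗[ℂ] H) := InnerProductSpace.ofCore (core H).toCore

theorem inner_tmul (a b c d : H) :
    @inner ℂ (H ⊗[ℂ] H) InnerProductSpace.toInner (a ⊗ₜ[ℂ] b) (c ⊗ₜ[ℂ] d)
      = ⟪a, c⟫_ℂ * ⟪b, d⟫_ℂ := by
  have key : ∀ (x y : H) (p : Fin (Module.finrank ℂ H) × Fin (Module.finrank ℂ H)),
      (tb H).repr (x ⊗ₜ[ℂ] y) p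
        = ⟪(stdOrthonormalBasis ℂ H) p.1, x⟫_ℂ * ⟪(stdOrthonormalBasis ℂ H) p.2, y⟫_ℂ := by
    rintro x y ⟨i, j⟩
    rw [tb, Module.Basis.tensorProduct_repr_tmul_apply, smul_eq_mul,
      OrthonormalBasis.coe_toBasis_repr_apply, OrthonormalBasis.coe_toBasis_repr_apply,
      OrthonormalBasis.repr_apply_apply, OrthonormalBasis.repr_apply_apply, mul_comm]
  show (∑ p, conj ((tb H).repr (a ⊗ₜ[ℂ] b) p) * ((tb H).repr (c ⊗ₜ[ℂ] d) p)) = _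
  simp only [key, map_mul]
  rw [← Finset.univ_product_univ, Finset.sum_product]
  have h : ∀ i j : Fin (Module.finrank ℂ H),
      (conj ⟪(stdOrthonormalBasis ℂ H) i, a⟫_ℂ * conj ⟪(stdOrthonormalBasis ℂ H) j, b⟫_ℂ) *
        (⟪(stdOrthonormalBasis ℂ H) i, c⟫_ℂ * ⟪(stdOrthonormalBasis ℂ H) j, d⟫_ℂ)
      = (⟪a, (stdOrthonormalBasis ℂ H) i⟫_ℂ * ⟪(stdOrthonormalBasis ℂ H) i, c⟫_ℂ) *
        (⟪b, (stdOrthonormalBasis ℂ H) j⟫_ℂ * ⟪(stdOrthonormalBasis ℂ H) j, d⟫_ℂ) := by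
    intro i j
    rw [inner_conj_symm, inner_conj_symm]; ring
  simp only [h]
  rw [← Finset.sum_mul_sum]
  rw [OrthonormalBasis.sum_inner_mul_inner, OrthonormalBasis.sum_inner_mul_inner]

end TensorIP

/-! With `c i = ⟪b i, b i⟫`, orthogonality makes `δ†` the diagonal multiplication
`b i ⊗ b j ↦ if i = j then c i • b i else 0`, and `ε† 1 = ∑ i, (c i)⁻¹ • b i`. For any diagonal
multiplication, the monoid and Frobenius laws are checked on basis tensors, where both sides
vanish unless all indices agree; `∑ i, (c i)⁻¹ • b i` is a unit as soon as every `c i` is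
invertible, which holds here because basis vectors are nonzero. -/

namespace Module.Basis

variable {R M ι : Type*} [CommSemiring R] [AddCommMonoid M] [Module R M] [DecidableEq ι]
  (b : Basis ι R M) (c : ι → R)

def diagMul : M ⊗[R] M →ₗ[R] M :=
  (b.tensorProduct b).constr R fun p => if p.1 = p.2 then c p.1 • b p.1 else 0

@[simp]
theorem diagMul_tmul (i j : ι) : b.diagMul c (b i ⊗ₜ b j) = if i = j then c i • b i else 0 := by
  rw [diagMul, ← tensorProduct_apply, constr_basis]

theorem diagMul_assoc :
    b.diagMul c ∘ₗ TensorProduct.map (b.diagMul c) LinearMap.id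
      = b.diagMul c ∘ₗ TensorProduct.map LinearMap.id (b.diagMul c)
          ∘ₗ (TensorProduct.assoc R M M M).toLinearMap := by
  refine ((b.tensorProduct b).tensorProduct b).ext fun ⟨⟨i, j⟩, k⟩ => ?_
  simp only [tensorProduct_apply, LinearMap.comp_apply, TensorProduct.map_tmul,
    LinearMap.id_apply, LinearEquiv.coe_coe, TensorProduct.assoc_tmul]
  by_cases hij : i = j <;> by_cases hjk : j = k <;> subst_vars <;>
    simp [*, ← TensorProduct.smul_tmul', TensorProduct.tmul_smul, Ne.symm]

theorem diagMul_comp_comm :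
    b.diagMul c ∘ₗ (TensorProduct.comm R M M).toLinearMap = b.diagMul c := by
  refine (b.tensorProduct b).ext fun ⟨i, j⟩ => ?_
  by_cases hij : i = j <;> simp [hij, Ne.symm]

theorem diagMul_tmul_comm (x y : M) : b.diagMul c (x ⊗ₜ y) = b.diagMul c (y ⊗ₜ x) := by
  simpa using LinearMap.congr_fun (b.diagMul_comp_comm c) (y ⊗ₜ x)

theorem diagMul_sum_smul_tmul [Fintype ι] {d : ι → R} (hd : ∀ i, d i * c i = 1) (x : M) :
    b.diagMul c ((∑ i, d i • b i) ⊗ₜ x) = x := by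
  suffices b.diagMul c ∘ₗ TensorProduct.mk R M M (∑ i, d i • b i) = LinearMap.id from
    LinearMap.congr_fun this x
  refine b.ext fun j => ?_
  simp [smul_smul, hd]

theorem diagMul_tmul_sum_smul [Fintype ι] {d : ι → R} (hd : ∀ i, d i * c i = 1) (x : M) :
    b.diagMul c (x ⊗ₜ (∑ i, d i • b i)) = x := by
  rw [diagMul_tmul_comm, diagMul_sum_smul_tmul b c hd]

theorem diagMul_frobenius (δ : M →ₗ[R] M ⊗[R] M) (hδ : ∀ i, δ (b i) = b i ⊗ₜ b i) :
    TensorProduct.map (b.diagMul c) LinearMap.id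
        ∘ₗ (TensorProduct.assoc R M M M).symm.toLinearMap ∘ₗ TensorProduct.map LinearMap.id δ
      = δ ∘ₗ b.diagMul c := by
  refine (b.tensorProduct b).ext fun ⟨i, j⟩ => ?_
  by_cases hij : i = j <;>
    simp [hij, hδ, ← TensorProduct.smul_tmul']

end Module.Basis

section OrthogonalBasis

variable {ι : Type*} (b : Module.Basis ι ℂ H)
  (horth : ∀ i j, i ≠ j → ⟪b i, b j⟫_ℂ = 0)

include horth

theorem adjoint_eq_diagMul_inner_self [DecidableEq ι] (δ : H →ₗ[ℂ] H ⊗[ℂ] H)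
    (hδ : ∀ i, δ (b i) = b i ⊗ₜ[ℂ] b i) :
    LinearMap.adjoint δ = b.diagMul fun i => ⟪b i, b i⟫_ℂ := by
  refine (b.tensorProduct b).ext fun ⟨i, j⟩ => InnerProductSpace.ext_inner_left_basis b fun k => ?_
  rw [Module.Basis.tensorProduct_apply, LinearMap.adjoint_inner_right, hδ, TensorIP.inner_tmul,
    Module.Basis.diagMul_tmul]
  by_cases hki : k = i <;> by_cases hij : i = j <;> subst_vars <;>
    simp [*, inner_smul_right]

theorem adjoint_apply_one_eq_sum_inv_inner_self_smul [Fintype ι] (ε : H →ₗ[ℂ] ℂ)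
    (hε : ∀ i, ε (b i) = 1) :
    LinearMap.adjoint ε 1 = ∑ i, (⟪b i, b i⟫_ℂ)⁻¹ • b i := by
  refine InnerProductSpace.ext_inner_left_basis b fun k => ?_
  rw [LinearMap.adjoint_inner_right, hε, inner_sum, Finset.sum_eq_single k]
  · rw [inner_smul_right, inv_mul_cancel₀ (inner_self_ne_zero.mpr (b.ne_zero k))]
    simp
  · intro i _ hik
    rw [inner_smul_right, horth k i (Ne.symm hik), mul_zero]
  · simp

end OrthogonalBasis

/-- The adjoints `m := δ†` and `u := ε†` of copying and deleting maps of an orthogonal basis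
make `H` a commutative †-Frobenius monoid: `m` is associative, commutative, has `u 1` as a
two-sided unit, and the Frobenius law `(m ⊗ id) ∘ (id ⊗ δ) = δ ∘ m` holds. -/
theorem dagger_frobenius_of_orthogonal_basis
    {H : Type*} [NormedAddCommGroup H] [InnerProductSpace ℂ H] [FiniteDimensional ℂ H]
    {ι : Type*} [Fintype ι] (b : Module.Basis ι ℂ H)
    (horth : ∀ i j, i ≠ j → ⟪b i, b j⟫_ℂ = 0)
    (δ : H →ₗ[ℂ] H ⊗[ℂ] H) (ε : H →ₗ[ℂ] ℂ)
    (hδ : ∀ i, δ (b i) = b i ⊗ₜ[ℂ] b i) (hε : ∀ i, ε (b i) = 1) :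
    (LinearMap.adjoint δ ∘ₗ TensorProduct.map (LinearMap.adjoint δ) LinearMap.id
        = LinearMap.adjoint δ ∘ₗ TensorProduct.map LinearMap.id (LinearMap.adjoint δ)
            ∘ₗ (TensorProduct.assoc ℂ H H H).toLinearMap)
      ∧ (LinearMap.adjoint δ ∘ₗ (TensorProduct.comm ℂ H H).toLinearMap = LinearMap.adjoint δ)
      ∧ (∀ x : H, LinearMap.adjoint δ (LinearMap.adjoint ε 1 ⊗ₜ[ℂ] x) = x)
      ∧ (∀ x : H, LinearMap.adjoint δ (x ⊗ₜ[ℂ] LinearMap.adjoint ε 1) = x)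
      ∧ (TensorProduct.map (LinearMap.adjoint δ) LinearMap.id
            ∘ₗ (TensorProduct.assoc ℂ H H H).symm.toLinearMap
            ∘ₗ TensorProduct.map LinearMap.id δ
          = δ ∘ₗ LinearMap.adjoint δ) := by
  classical
  have hinv : ∀ i, (⟪b i, b i⟫_ℂ)⁻¹ * ⟪b i, b i⟫_ℂ = 1 := fun i =>
    inv_mul_cancel₀ (inner_self_ne_zero.mpr (b.ne_zero i))
  rw [adjoint_eq_diagMul_inner_self b horth δ hδ,
    adjoint_apply_one_eq_sum_inv_inner_self_smul b horth ε hε]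
  exact ⟨b.diagMul_assoc _, b.diagMul_comp_comm _, b.diagMul_sum_smul_tmul _ hinv,
    b.diagMul_tmul_sum_smul _ hinv, b.diagMul_frobenius _ δ hδ⟩
end
end

section
/- Let c : ι → ℂ be coefficients such that c i ≠ 0 and c j ≠ 0 for some indices i ≠ j. Then the vector Σ_k c k · (φ k ⊗ φ k) ∈ H ⊗ H is entangled: for all vectors a, b ∈ H one has Σ_k c k · (φ k ⊗ φ k) ≠ a ⊗ b. -/
/-!
In the product basis `b i ⊗ b' j` the coordinates of `m ⊗ n` form the rank-one matrix
`(b.repr m i * b'.repr n j)`, whose `2 × 2` minors vanish, while those of `∑ c k • (b k ⊗ b' k)` form the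
diagonal matrix `diag c`, whose minor at `{i, j}` is `c i * c j ≠ 0`.
-/

noncomputable section

open scoped TensorProduct ComplexConjugate InnerProductSpace

namespace Module.Basis

variable {R M N ι : Type*} [CommSemiring R] [AddCommMonoid M] [Module R M]
  [AddCommMonoid N] [Module R N] [Fintype ι]

theorem tensorProduct_repr_sum_smul_tmul [DecidableEq ι] (b : Basis ι R M) (b' : Basis ι R N)
    (c : ι → R) (i j : ι) :
    (b.tensorProduct b').repr (∑ k, c k • (b k ⊗ₜ[R] b' k)) (i, j) = if i = j then c i else 0 := by
  simp only [← tensorProduct_apply, map_sum, map_smul, repr_self, Finsupp.coe_finsetSum,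
    Finsupp.coe_smul, Finset.sum_apply, Pi.smul_apply, Finsupp.single_apply, Prod.mk.injEq,
    smul_eq_mul, mul_ite, mul_one, mul_zero]
  split_ifs with hij
  · subst hij
    simp
  · exact Finset.sum_eq_zero fun k _ => if_neg fun h => hij (h.1.symm.trans h.2)

theorem sum_smul_tmul_ne_tmul [NoZeroDivisors R] (b : Basis ι R M) (b' : Basis ι R N)
    {c : ι → R} {i j : ι} (hij : i ≠ j) (hci : c i ≠ 0) (hcj : c j ≠ 0) (m : M) (n : N) :
    ∑ k, c k • (b k ⊗ₜ[R] b' k) ≠ m ⊗ₜ[R] n := by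
  classical
  intro h
  have coord (p q : ι) : (if p = q then c p else 0) = b.repr m p * b'.repr n q := by
    rw [← b.tensorProduct_repr_sum_smul_tmul b' c p q, h, tensorProduct_repr_tmul_apply,
      smul_eq_mul, mul_comm]
  have hii := coord i i
  have hjj := coord j j
  have hoff := coord i j
  rw [if_pos rfl] at hii hjj
  rw [if_neg hij] at hoff
  refine mul_ne_zero hci hcj ?_
  calc c i * c j = (b.repr m i * b'.repr n j) * (b.repr m j * b'.repr n i) := by
        rw [hii, hjj]; ring
    _ = 0 := by rw [← hoff, zero_mul]

end Module.Basis

theorem sum_tmul_entangled_general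
    {H : Type*} [NormedAddCommGroup H] [InnerProductSpace ℂ H]
    {ι : Type*} [Fintype ι] (b : Module.Basis ι ℂ H)
    (c : ι → ℂ) (i j : ι) (hij : i ≠ j) (hci : c i ≠ 0) (hcj : c j ≠ 0) :
    ∀ a v : H, (∑ k, c k • (b k ⊗ₜ[ℂ] b k)) ≠ a ⊗ₜ[ℂ] v :=
  b.sum_smul_tmul_ne_tmul b hij hci hcj

/-- If at least two of the coefficients `c k` are nonzero, then `Σ_k c k • (φ k ⊗ φ k)`
is entangled: it is not of the form `a ⊗ b`. -/
theorem sum_tmul_entangled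
    {H : Type*} [NormedAddCommGroup H] [InnerProductSpace ℂ H] [FiniteDimensional ℂ H]
    {ι : Type*} [Fintype ι] (b : Module.Basis ι ℂ H)
    (horth : ∀ i j, i ≠ j → ⟪b i, b j⟫_ℂ = 0)
    (c : ι → ℂ) (i j : ι) (hij : i ≠ j) (hci : c i ≠ 0) (hcj : c j ≠ 0) :
    ∀ a v : H, (∑ k, c k • (b k ⊗ₜ[ℂ] b k)) ≠ a ⊗ₜ[ℂ] v :=
  sum_tmul_entangled_general b c i j hij hci hcj
end
end

section
/- A vector ψ ∈ H satisfies δ(ψ) = ψ ⊗ ψ if and only if ψ = 0 or ψ = φ i for some index i. In particular, the map δ faithfully encodes the orthogonal basis: the nonzero solutions of δ(ψ) = ψ ⊗ ψ are exactly the basis vectors. -/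
/-!
Write `ψ = ∑ cᵢ bᵢ`. In the basis `bᵢ ⊗ bⱼ`, the `(i, j)` coefficient of `δ ψ = ∑ cᵢ bᵢ ⊗ bᵢ` is
`cᵢ` if `i = j` and `0` otherwise, while that of `ψ ⊗ ψ` is `cᵢ cⱼ`. So every `cᵢ` is idempotent,
hence `0` or `1` (there are no zero divisors), and no two of them are nonzero.
-/

open scoped TensorProduct ComplexConjugate InnerProductSpace

namespace Finsupp

variable {ι R : Type*} [Ring R] [NoZeroDivisors R] [DecidableEq ι]

theorem eq_zero_or_eq_single_one_of_mul_eq_ite {c : ι →₀ R}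
    (hc : ∀ i j, c i * c j = if i = j then c i else 0) :
    c = 0 ∨ ∃ i, c = single i 1 := by
  by_cases hzero : c = 0
  · exact .inl hzero
  obtain ⟨i, hi⟩ : ∃ i, c i ≠ 0 := by simpa [Finsupp.ext_iff] using hzero
  have hci : c i = 1 := mul_left_cancel₀ hi (by simpa using hc i i)
  refine .inr ⟨i, ext fun j => ?_⟩
  rcases eq_or_ne i j with rfl | hij
  · simp [hci]
  · simpa [hij, hi] using hc i j

end Finsupp

namespace Module.Basis

variable {ι R M : Type*} [AddCommGroup M]

theorem tensorProduct_repr_apply_of_copy [CommSemiring R] [Module R M] [DecidableEq ι]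
    (b : Basis ι R M) {δ : M →ₗ[R] M ⊗[R] M} (hδ : ∀ i, δ (b i) = b i ⊗ₜ b i) (x : M) (i j : ι) :
    (b.tensorProduct b).repr (δ x) (i, j) = if i = j then b.repr x i else 0 := by
  have : Finsupp.lapply (i, j) ∘ₗ (b.tensorProduct b).repr.toLinearMap ∘ₗ δ =
      if i = j then Finsupp.lapply i ∘ₗ b.repr.toLinearMap else 0 :=
    b.ext fun k => by split_ifs <;> simp [hδ, Finsupp.single_apply] <;> aesop
  have hx := LinearMap.congr_fun this x
  split_ifs at hx ⊢ <;> exact hx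

theorem copy_eq_tmul_self_iff [CommRing R] [NoZeroDivisors R] [Module R M]
    (b : Basis ι R M) {δ : M →ₗ[R] M ⊗[R] M} (hδ : ∀ i, δ (b i) = b i ⊗ₜ b i) (x : M) :
    δ x = x ⊗ₜ x ↔ x = 0 ∨ ∃ i, x = b i := by
  classical
  constructor
  · intro h
    have hc (i j : ι) : b.repr x i * b.repr x j = if i = j then b.repr x i else 0 := by
      rw [← b.tensorProduct_repr_apply_of_copy hδ, h, tensorProduct_repr_tmul_apply, smul_eq_mul,
        mul_comm]
    rcases Finsupp.eq_zero_or_eq_single_one_of_mul_eq_ite hc with h0 | ⟨i, hi⟩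
    · exact .inl (b.repr.map_eq_zero_iff.mp h0)
    · exact .inr ⟨i, b.repr.injective (by rw [hi, b.repr_self])⟩
  · rintro (rfl | ⟨i, rfl⟩) <;> simp [hδ]

end Module.Basis

theorem copied_iff_basis_vector_general
    {H : Type*} [NormedAddCommGroup H] [InnerProductSpace ℂ H]
    {ι : Type*} (b : Module.Basis ι ℂ H)
    (δ : H →ₗ[ℂ] H ⊗[ℂ] H) (hδ : ∀ i, δ (b i) = b i ⊗ₜ[ℂ] b i) (ψ : H) :
    δ ψ = ψ ⊗ₜ[ℂ] ψ ↔ ψ = 0 ∨ ∃ i, ψ = b i :=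
  b.copy_eq_tmul_self_iff hδ ψ

/-- The nonzero solutions of `δ ψ = ψ ⊗ ψ` are exactly the basis vectors:
`δ` faithfully encodes the orthogonal basis. -/
theorem copied_iff_basis_vector
    {H : Type*} [NormedAddCommGroup H] [InnerProductSpace ℂ H] [FiniteDimensional ℂ H]
    {ι : Type*} [Fintype ι] (b : Module.Basis ι ℂ H)
    (horth : ∀ i j, i ≠ j → ⟪b i, b j⟫_ℂ = 0)
    (δ : H →ₗ[ℂ] H ⊗[ℂ] H) (hδ : ∀ i, δ (b i) = b i ⊗ₜ[ℂ] b i) (ψ : H) :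
    δ ψ = ψ ⊗ₜ[ℂ] ψ ↔ ψ = 0 ∨ ∃ i, ψ = b i :=
  copied_iff_basis_vector_general b δ hδ ψ
end

section
/- Define N(α) to be the operator norm of the right action R_α : H → H. Then N(α) = 0 if and only if α = 0, and N satisfies the C*-identity: for all α ∈ H, N(m(α ⊗ α')) = N(α)². Hence the algebra (H, m, u) with involution α ↦ α' carries a C*-algebra norm. -/
noncomputable section

open scoped TensorProduct ComplexConjugate InnerProductSpace

open scoped TensorProduct ComplexConjugate InnerProductSpace

variable {H : Type*} [NormedAddCommGroup H] [InnerProductSpace ℂ H] [FiniteDimensional ℂ H]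

/-- `(H, m, u)` is a commutative †-Frobenius monoid: `m` is associative and commutative,
`u 1` is a two-sided unit for `m`, and the Frobenius law
`(m ⊗ id) ∘ (id ⊗ δ) = δ ∘ m` holds, where `δ := m†`. -/
def IsFrobenius (m : H ⊗[ℂ] H →ₗ[ℂ] H) (u : ℂ →ₗ[ℂ] H) : Prop :=
  (m ∘ₗ TensorProduct.map m LinearMap.id
      = m ∘ₗ TensorProduct.map LinearMap.id m ∘ₗ (TensorProduct.assoc ℂ H H H).toLinearMap)
    ∧ (m ∘ₗ (TensorProduct.comm ℂ H H).toLinearMap = m)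
    ∧ (∀ x : H, m (u 1 ⊗ₜ[ℂ] x) = x)
    ∧ (∀ x : H, m (x ⊗ₜ[ℂ] u 1) = x)
    ∧ (TensorProduct.map m LinearMap.id ∘ₗ (TensorProduct.assoc ℂ H H H).symm.toLinearMap
        ∘ₗ TensorProduct.map LinearMap.id (LinearMap.adjoint m)
      = LinearMap.adjoint m ∘ₗ m)

/-- `ψ` is a copyable element: `δ ψ = ψ ⊗ ψ` and `ε ψ = 1`, where `δ := m†`, `ε := u†`. -/
def Copyable (m : H ⊗[ℂ] H →ₗ[ℂ] H) (u : ℂ →ₗ[ℂ] H) (ψ : H) : Prop :=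
  LinearMap.adjoint m ψ = ψ ⊗ₜ[ℂ] ψ ∧ LinearMap.adjoint u ψ = 1

/-- The right action `R_α : H → H`, `x ↦ m (x ⊗ α)`. -/
def rightAction (m : H ⊗[ℂ] H →ₗ[ℂ] H) (α : H) : H →ₗ[ℂ] H :=
  m ∘ₗ (TensorProduct.mk ℂ H H).flip α

/-- The element `α' := (id_H ⊗ α†) (δ (u 1))`, under the identification `H ⊗ ℂ ≃ H`,
where `α† : H → ℂ` is `x ↦ ⟪α, x⟫` and `δ := m†`. -/
def conjElem (m : H ⊗[ℂ] H →ₗ[ℂ] H) (u : ℂ →ₗ[ℂ] H) (α : H) : H :=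
  TensorProduct.rid ℂ H
    ((TensorProduct.map LinearMap.id (innerₛₗ ℂ α)) (LinearMap.adjoint m (u 1)))

/-! The Frobenius law and the unit give `δ z = (m ⊗ id)(z ⊗ δ (u 1))`, from which `R_α† = R_α'`;
associativity gives `R_{αβ} = R_β ∘ R_α`, and `R_α (u 1) = α` makes `α ↦ R_α` injective.
So `α ↦ R_α` is a faithful anti-representation of `(H, m, ')` by operators, and the
C*-identity of the operator norm on `H →L[ℂ] H` transfers to `N`. -/

open TensorProduct

section Algebraic

variable {E : Type*} [NormedAddCommGroup E] [InnerProductSpace ℂ E] {m : E ⊗[ℂ] E →ₗ[ℂ] E}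

@[simp]
theorem rightAction_apply (α x : E) : rightAction m α x = m (x ⊗ₜ[ℂ] α) := rfl

theorem rightAction_mul
    (hassoc : m ∘ₗ map m LinearMap.id
      = m ∘ₗ map LinearMap.id m ∘ₗ (TensorProduct.assoc ℂ E E E).toLinearMap) (α β : E) :
    rightAction m (m (α ⊗ₜ[ℂ] β)) = rightAction m β ∘ₗ rightAction m α := by
  ext x
  simpa using (LinearMap.congr_fun hassoc ((x ⊗ₜ[ℂ] α) ⊗ₜ[ℂ] β)).symm

theorem rightAction_eq_zero_iff {e : E} (hlu : ∀ x : E, m (e ⊗ₜ[ℂ] x) = x) {α : E} :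
    rightAction m α = 0 ↔ α = 0 := by
  refine ⟨fun h => ?_, fun h => by ext x; simp [h]⟩
  simpa [hlu] using LinearMap.congr_fun h e

end Algebraic

section Adjoint

variable {m : H ⊗[ℂ] H →ₗ[ℂ] H} {u : ℂ →ₗ[ℂ] H}

/- Mathlib has its own `Inner` instance on tensor products, distinct from the `TensorIP` one. -/
local notation "⟪" x ", " y "⟫_⊗" => @inner ℂ (H ⊗[ℂ] H) InnerProductSpace.toInner x y

theorem adjoint_apply_eq_map_assoc_symm
    (hru : ∀ x : H, m (x ⊗ₜ[ℂ] u 1) = x)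
    (hfro : map m LinearMap.id ∘ₗ (TensorProduct.assoc ℂ H H H).symm.toLinearMap
        ∘ₗ map LinearMap.id (LinearMap.adjoint m) = LinearMap.adjoint m ∘ₗ m) (z : H) :
    LinearMap.adjoint m z
      = map m LinearMap.id ((TensorProduct.assoc ℂ H H H).symm
          (z ⊗ₜ[ℂ] LinearMap.adjoint m (u 1))) := by
  simpa [hru z] using (LinearMap.congr_fun hfro (z ⊗ₜ[ℂ] u 1)).symm

theorem inner_rid_map_innerₛₗ (m : H ⊗[ℂ] H →ₗ[ℂ] H) (x y α : H) (t : H ⊗[ℂ] H) :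
    ⟪m (x ⊗ₜ[ℂ] TensorProduct.rid ℂ H (map LinearMap.id (innerₛₗ ℂ α) t)), y⟫_ℂ
      = ⟪map m LinearMap.id ((TensorProduct.assoc ℂ H H H).symm (x ⊗ₜ[ℂ] t)), y ⊗ₜ[ℂ] α⟫_⊗ := by
  induction t using TensorProduct.induction_on with
  | zero => simp
  | tmul a b =>
    simp only [map_tmul, rid_tmul, assoc_symm_tmul, TensorIP.inner_tmul, tmul_smul, map_smul,
      inner_smul_left, LinearMap.id_coe, id_eq, innerₛₗ_apply_apply, inner_conj_symm]
    ring
  | add s t hs ht => simp only [map_add, tmul_add, inner_add_left, hs, ht]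

theorem adjoint_rightAction
    (hru : ∀ x : H, m (x ⊗ₜ[ℂ] u 1) = x)
    (hfro : map m LinearMap.id ∘ₗ (TensorProduct.assoc ℂ H H H).symm.toLinearMap
        ∘ₗ map LinearMap.id (LinearMap.adjoint m) = LinearMap.adjoint m ∘ₗ m) (α : H) :
    LinearMap.adjoint (rightAction m α) = rightAction m (conjElem m u α) := by
  refine ((LinearMap.eq_adjoint_iff _ _).mpr fun x y => ?_).symm
  calc ⟪rightAction m (conjElem m u α) x, y⟫_ℂ
      = ⟪LinearMap.adjoint m x, y ⊗ₜ[ℂ] α⟫_⊗ := by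
        rw [adjoint_apply_eq_map_assoc_symm hru hfro x]
        exact inner_rid_map_innerₛₗ m x y α _
    _ = ⟪x, rightAction m α y⟫_ℂ := LinearMap.adjoint_inner_left m _ x

end Adjoint

/-- The operator norm `N α := ‖R_α‖` vanishes only at `0` and satisfies the C*-identity
`N (m (α ⊗ α')) = N α ^ 2`; hence `(H, m, u)` with involution `α ↦ α'` carries a
C*-algebra norm. -/
theorem rightAction_opNorm_cstar (m : H ⊗[ℂ] H →ₗ[ℂ] H) (u : ℂ →ₗ[ℂ] H)
    (hfrob : IsFrobenius m u) :
    (∀ α : H, ‖LinearMap.toContinuousLinearMap (rightAction m α)‖ = 0 ↔ α = 0)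
      ∧ (∀ α : H, ‖LinearMap.toContinuousLinearMap (rightAction m (m (α ⊗ₜ[ℂ] conjElem m u α)))‖
          = ‖LinearMap.toContinuousLinearMap (rightAction m α)‖ ^ 2) := by
  obtain ⟨hassoc, -, hlu, hru, hfro⟩ := hfrob
  refine ⟨fun α => by rw [norm_eq_zero, LinearEquiv.map_eq_zero_iff,
    rightAction_eq_zero_iff hlu], fun α => ?_⟩
  have hstar : LinearMap.toContinuousLinearMap (rightAction m (conjElem m u α))
      = star (LinearMap.toContinuousLinearMap (rightAction m α)) := by
    rw [← adjoint_rightAction hru hfro, ContinuousLinearMap.star_eq_adjoint,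
      LinearMap.adjoint_toContinuousLinearMap]
  set A := LinearMap.toContinuousLinearMap (rightAction m α)
  have hmul : LinearMap.toContinuousLinearMap (rightAction m (m (α ⊗ₜ[ℂ] conjElem m u α)))
      = star A * A := by
    rw [rightAction_mul hassoc, ← hstar]
    rfl
  rw [hmul, CStarRing.norm_star_mul_self, sq]
end
end

section
/- The set of copyable elements of a commutative †-Frobenius monoid (H, m, u) is a basis of H: the copyable elements are linearly independent and span H. -/
/-! For copyable `ψ` the functional `x ↦ ⟪x, ψ⟫` is a character of the monoid `(H, m, u 1)`, and
conversely, so distinct copyable elements are linearly independent by Dedekind's lemma.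
For spanning, the Frobenius law makes `m†` a map of left modules, so the adjoint of each left
multiplication `L_a` is again a left multiplication. The `L_a` are therefore commuting normal
operators and `H` is spanned by their common eigenvectors. The eigenvalues at a common
eigenvector `w ≠ 0` form a character, represented by a copyable `ψ`; so if `x` is orthogonal to
every copyable element then `L_x w = ⟪ψ, x⟫ w = 0`, whence `L_x = 0` and `x = L_x (u 1) = 0`. -/

noncomputable section

open scoped TensorProduct ComplexConjugate InnerProductSpace

open scoped TensorProduct ComplexConjugate InnerProductSpace

variable {H : Type*} [NormedAddCommGroup H] [InnerProductSpace ℂ H] [FiniteDimensional ℂ H]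

open TensorProduct

theorem Module.End.span_commonEigenvectors_eq_top {E : Type*} [NormedAddCommGroup E]
    [InnerProductSpace ℂ E] [FiniteDimensional ℂ E] {ι : Type*} (A : ι → Module.End ℂ E)
    (hcomm : ∀ i j, Commute (A i) (A j)) (hadj : ∀ i, ∃ j, LinearMap.adjoint (A i) = A j) :
    Submodule.span ℂ {w : E | ∀ i, ∃ c : ℂ, A i w = c • w} = ⊤ := by
  have hcomm_adj : ∀ i j, Commute (A i) (star (A j)) := fun i j => by
    obtain ⟨k, hk⟩ := hadj j
    rw [LinearMap.star_eq_adjoint, hk]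
    exact hcomm i k
  -- `z • A + conj z • A†` is self-adjoint, and `A` is recovered from the cases `z = 1, I`.
  let T : ι × ℂ → Module.End ℂ E := fun p => p.2 • A p.1 + conj p.2 • star (A p.1)
  have hT : ∀ p, (T p).IsSymmetric := fun p => by
    rw [LinearMap.isSymmetric_iff_isSelfAdjoint, IsSelfAdjoint]
    simp only [T, star_add, star_smul, star_star, Complex.star_def, Complex.conj_conj, add_comm]
  have hTcomm : Pairwise (Function.onFun Commute T) := fun p q _ => by
    have h₁ := hcomm p.1 q.1
    have h₂ := hcomm_adj p.1 q.1
    have h₃ := (hcomm_adj q.1 p.1).symm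
    have h₄ : Commute (star (A p.1)) (star (A q.1)) := by
      simpa only [star_mul, Commute, SemiconjBy] using congrArg star (hcomm q.1 p.1).eq
    exact ((h₁.smul_left _).smul_right _ |>.add_right ((h₂.smul_left _).smul_right _)).add_left
      ((h₃.smul_left _).smul_right _ |>.add_right ((h₄.smul_left _).smul_right _))
  rw [eq_top_iff, ← LinearMap.IsSymmetric.iSup_iInf_eq_top_of_commute hT hTcomm]
  refine iSup_le fun γ w hw => Submodule.subset_span fun i =>
    ⟨(γ (i, 1) - Complex.I * γ (i, Complex.I)) / 2, ?_⟩
  have hγ : ∀ z, T (i, z) w = γ (i, z) • w := fun z =>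
    Module.End.mem_eigenspace_iff.mp ((Submodule.mem_iInf _).mp hw (i, z))
  have h₁ := hγ 1
  have h₂ := hγ Complex.I
  simp only [T, Complex.conj_I, map_one, one_smul, LinearMap.add_apply, LinearMap.smul_apply,
    neg_smul, LinearMap.neg_apply] at h₁ h₂
  linear_combination (norm := match_scalars <;> ring_nf <;> simp [Complex.I_sq])
    (2⁻¹ : ℂ) • h₁ - (Complex.I / 2) • h₂

theorem LinearMap.exists_eq_smul_of_range_le_span_singleton {K V W : Type*} [Field K]
    [AddCommGroup V] [Module K V] [AddCommGroup W] [Module K W] (R : V →ₗ[K] W) {w : W}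
    (hw : w ≠ 0) (hR : LinearMap.range R ≤ K ∙ w) : ∃ f : V →ₗ[K] K, ∀ v, R v = f v • w :=
  ⟨(LinearEquiv.coord K W w hw).toLinearMap ∘ₗ R.codRestrict _ fun v => hR ⟨v, rfl⟩, fun v => by
    simp⟩

-- Mathlib has its own inner product on `H ⊗ H`; this makes `⟪·, ·⟫_ℂ` use the one of `TensorIP`,
-- with respect to which the adjoints `m†` are taken.
instance TensorIP.instInner : Inner ℂ (H ⊗[ℂ] H) := InnerProductSpace.toInner

theorem TensorIP.ext_inner_tmul {x y : H ⊗[ℂ] H} (h : ∀ a b : H, ⟪a ⊗ₜ b, x⟫_ℂ = ⟪a ⊗ₜ b, y⟫_ℂ) :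
    x = y := by
  refine ext_inner_left ℂ fun z => ?_
  induction z using TensorProduct.induction_on with
  | zero => simp only [inner_zero_left]
  | tmul a b => exact h a b
  | add z z' hz hz' => rw [inner_add_left, inner_add_left, hz, hz']

theorem TensorIP.inner_map_tmul (f g : Module.End ℂ H) (t : H ⊗[ℂ] H) (x y : H) :
    ⟪map f g t, x ⊗ₜ y⟫_ℂ = ⟪t, LinearMap.adjoint f x ⊗ₜ LinearMap.adjoint g y⟫_ℂ := by
  induction t using TensorProduct.induction_on with
  | zero => simp only [map_zero, inner_zero_left]
  | tmul a b =>
    rw [map_tmul, TensorIP.inner_tmul, TensorIP.inner_tmul, LinearMap.adjoint_inner_right,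
      LinearMap.adjoint_inner_right]
  | add t t' ht ht' => rw [map_add, inner_add_left, inner_add_left, ht, ht']

theorem copyable_iff {m : H ⊗[ℂ] H →ₗ[ℂ] H} {u : ℂ →ₗ[ℂ] H} {ψ : H} :
    Copyable m u ψ ↔ (∀ a b, ⟪m (a ⊗ₜ b), ψ⟫_ℂ = ⟪a, ψ⟫_ℂ * ⟪b, ψ⟫_ℂ) ∧ ⟪u 1, ψ⟫_ℂ = 1 := by
  refine and_congr ⟨fun h a b => ?_, fun h => TensorIP.ext_inner_tmul fun a b => ?_⟩ ?_
  · rw [← LinearMap.adjoint_inner_right, h, TensorIP.inner_tmul]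
  · rw [LinearMap.adjoint_inner_right, h, TensorIP.inner_tmul]
  · rw [← LinearMap.adjoint_inner_right, RCLike.inner_apply, map_one, mul_one]

theorem linearIndependent_copyable {m : H ⊗[ℂ] H →ₗ[ℂ] H} {u : ℂ →ₗ[ℂ] H}
    (one_mul : ∀ x, m (u 1 ⊗ₜ x) = x) (mul_one : ∀ x, m (x ⊗ₜ u 1) = x) :
    LinearIndependent ℂ ((↑) : {ψ : H // Copyable m u ψ} → H) := by
  let : MulOneClass H := { mul := fun a b => m (a ⊗ₜ b), one := u 1, one_mul, mul_one }
  -- For copyable `ψ`, `⟪·, ψ⟫` is a character of the monoid `(H, m, u 1)`, linear in `ψ`.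
  let χ : {ψ : H // Copyable m u ψ} → (H →* ℂ) := fun ψ =>
    { toFun x := ⟪x, ψ⟫_ℂ, map_one' := (copyable_iff.1 ψ.2).2, map_mul' := (copyable_iff.1 ψ.2).1 }
  have hχ : Function.Injective χ := fun ψ φ h =>
    Subtype.ext (ext_inner_left ℂ fun x => DFunLike.congr_fun h x)
  exact .of_comp (LinearMap.pi fun x => innerₛₗ ℂ x) ((linearIndependent_monoidHom H ℂ).comp χ hχ)

def mulLeft {R A : Type*} [CommSemiring R] [AddCommMonoid A] [Module R A]
    (m : A ⊗[R] A →ₗ[R] A) : A →ₗ[R] Module.End R A :=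
  (TensorProduct.mk R A A).compr₂ m

@[simp] theorem mulLeft_apply {R A : Type*} [CommSemiring R] [AddCommMonoid A] [Module R A]
    (m : A ⊗[R] A →ₗ[R] A) (a x : A) : mulLeft m a x = m (a ⊗ₜ x) := rfl

namespace IsFrobenius

variable {m : H ⊗[ℂ] H →ₗ[ℂ] H} {u : ℂ →ₗ[ℂ] H}

theorem mul_comm_tmul (hfr : IsFrobenius m u) (a b : H) : m (a ⊗ₜ b) = m (b ⊗ₜ a) := by
  simpa using LinearMap.congr_fun hfr.2.1 (b ⊗ₜ a)

theorem mul_assoc_tmul (hfr : IsFrobenius m u) (a b c : H) :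
    m (m (a ⊗ₜ b) ⊗ₜ c) = m (a ⊗ₜ m (b ⊗ₜ c)) := by
  simpa using LinearMap.congr_fun hfr.1 ((a ⊗ₜ b) ⊗ₜ c)

theorem commute_mulLeft (hfr : IsFrobenius m u) (a b : H) :
    Commute (mulLeft m a) (mulLeft m b) := LinearMap.ext fun x => by
  simp only [Module.End.mul_apply, mulLeft_apply]
  rw [← hfr.mul_assoc_tmul, hfr.mul_comm_tmul a b, hfr.mul_assoc_tmul]

theorem adjoint_mul_tmul (hfr : IsFrobenius m u) (a y : H) :
    LinearMap.adjoint m (m (a ⊗ₜ y)) = map (mulLeft m a) LinearMap.id (LinearMap.adjoint m y) := by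
  rw [← LinearMap.comp_apply (LinearMap.adjoint m) m, ← hfr.2.2.2.2]
  simp only [LinearMap.comp_apply, map_tmul, LinearMap.id_apply, LinearEquiv.coe_coe]
  generalize LinearMap.adjoint m y = t
  induction t using TensorProduct.induction_on with
  | zero => simp only [tmul_zero, map_zero]
  | tmul b c => simp only [assoc_symm_tmul, map_tmul, mulLeft_apply, LinearMap.id_apply]
  | add t t' ht ht' => simp only [tmul_add, map_add, ht, ht']

theorem adjoint_mulLeft (hfr : IsFrobenius m u) (a : H) :
    LinearMap.adjoint (mulLeft m a) = mulLeft m (LinearMap.adjoint (mulLeft m a) (u 1)) := by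
  -- `m†` is a map of left modules, so `(mulLeft m a)†` is a map of right modules.
  have hright : ∀ x y, LinearMap.adjoint (mulLeft m a) (m (x ⊗ₜ y))
      = m (LinearMap.adjoint (mulLeft m a) x ⊗ₜ y) := fun x y => ext_inner_left ℂ fun z => by
    rw [LinearMap.adjoint_inner_right, mulLeft_apply, ← LinearMap.adjoint_inner_left m,
      hfr.adjoint_mul_tmul, TensorIP.inner_map_tmul, LinearMap.adjoint_id, LinearMap.id_apply,
      LinearMap.adjoint_inner_left]
  ext y
  rw [mulLeft_apply, ← hright, hfr.2.2.1 y]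

theorem exists_copyable_of_eigenvector (hfr : IsFrobenius m u) {w : H} (hw : w ≠ 0)
    (heig : ∀ a, ∃ c : ℂ, mulLeft m a w = c • w) :
    ∃ ψ, Copyable m u ψ ∧ ∀ a, mulLeft m a w = ⟪ψ, a⟫_ℂ • w := by
  obtain ⟨χ, hχ⟩ := ((mulLeft m).flip w).exists_eq_smul_of_range_le_span_singleton hw <| by
    rintro _ ⟨a, rfl⟩
    obtain ⟨c, hc⟩ := heig a
    exact Submodule.mem_span_singleton.2 ⟨c, hc.symm⟩
  replace hχ : ∀ a, m (a ⊗ₜ w) = χ a • w := hχ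
  have hχ_mul : ∀ a b, χ (m (a ⊗ₜ b)) = χ a * χ b := fun a b => smul_left_injective ℂ hw <|
    calc χ (m (a ⊗ₜ b)) • w = m (a ⊗ₜ m (b ⊗ₜ w)) := by rw [← hχ, hfr.mul_assoc_tmul]
      _ = (χ a * χ b) • w := by rw [hχ b, tmul_smul, map_smul, hχ a, smul_smul, mul_comm]
  have hχ_one : χ (u 1) = 1 := smul_left_injective ℂ hw <| by
    simp only [← hχ, hfr.2.2.1, one_smul]
  let ψ := (InnerProductSpace.toDual ℂ H).symm χ.toContinuousLinearMap
  have hψ : ∀ a, ⟪ψ, a⟫_ℂ = χ a := fun a => InnerProductSpace.toDual_symm_apply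
  refine ⟨ψ, copyable_iff.2 ⟨fun a b => ?_, ?_⟩, fun a => by rw [hψ]; exact hχ a⟩
  · rw [← inner_conj_symm, hψ, hχ_mul, map_mul, ← hψ, ← hψ, inner_conj_symm, inner_conj_symm]
  · rw [← inner_conj_symm, hψ, hχ_one, map_one]

theorem span_copyable_eq_top (hfr : IsFrobenius m u) :
    Submodule.span ℂ {ψ : H | Copyable m u ψ} = ⊤ := by
  refine Submodule.orthogonal_eq_bot_iff.mp ((Submodule.eq_bot_iff _).2 fun x hx => ?_)
  have hker : Submodule.span ℂ {w | ∀ a, ∃ c : ℂ, mulLeft m a w = c • w}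
      ≤ LinearMap.ker (mulLeft m x) := by
    refine Submodule.span_le.2 fun w hw => ?_
    rcases eq_or_ne w 0 with rfl | hw0
    · exact zero_mem _
    obtain ⟨ψ, hψ, hmul⟩ := hfr.exists_copyable_of_eigenvector hw0 hw
    rw [SetLike.mem_coe, LinearMap.mem_ker, hmul,
      (Submodule.mem_orthogonal _ x).1 hx ψ (Submodule.subset_span hψ), zero_smul]
  rw [Module.End.span_commonEigenvectors_eq_top (mulLeft m) hfr.commute_mulLeft
    fun a => ⟨_, hfr.adjoint_mulLeft a⟩, top_le_iff, LinearMap.ker_eq_top] at hker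
  rw [← hfr.2.2.2.1 x]
  exact LinearMap.congr_fun hker (u 1)

end IsFrobenius

/-- The copyable elements of a commutative †-Frobenius monoid form a basis of `H`:
they are linearly independent and span `H`. -/
theorem copyable_basis (m : H ⊗[ℂ] H →ₗ[ℂ] H) (u : ℂ →ₗ[ℂ] H)
    (hfrob : IsFrobenius m u) :
    LinearIndependent ℂ ((↑) : {ψ : H // Copyable m u ψ} → H)
      ∧ Submodule.span ℂ {ψ : H | Copyable m u ψ} = ⊤ :=
  ⟨linearIndependent_copyable hfrob.2.2.1 hfrob.2.2.2.1, hfrob.span_copyable_eq_top⟩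
end
end

section
/- For a commutative special Frobenius algebra (V, m, u, δ, ε) on a finite-dimensional complex vector space V, the set of copyable elements (vectors ψ ∈ V with δ(ψ) = ψ ⊗ ψ and ε(ψ) = 1) is a basis of V: the copyable elements are linearly independent and span V. -/
/-!
Writing `x * y := m (x ⊗ y)` makes `V` a commutative `ℂ`-algebra in which the left Frobenius law
reads `δ (x * y) = (x ⊗ 1) * δ y`. Applying `ε ⊗ id` to `δ (x * ψ) = x ψ ⊗ ψ` shows that a copyable
`ψ` satisfies `x * ψ = ε (x * ψ) • ψ`; hence distinct copyable elements multiply to zero, and by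
speciality each is idempotent: they are orthogonal idempotents, so linearly independent.

For spanning, speciality gives `tr (x * ·) = ε x`, so the trace form is nondegenerate and `V` is
reduced. A reduced finite-dimensional algebra over `ℂ` is a product of copies of `ℂ`, and each of
its primitive idempotents `e` has `δ e = (e ⊗ 1) * δ e ∈ e ⊗ V`, which the counit and speciality
force to be `e ⊗ e`.
-/

open TensorProduct LinearMap

theorem exists_algHom_sub_algebraMap_mem {K A : Type*} [Field K] [IsAlgClosed K] [CommRing A]
    [Algebra K A] [FiniteDimensional K A] (I : Ideal A) [I.IsMaximal] :
    ∃ χ : A →ₐ[K] K, ∀ x, x - algebraMap K A (χ x) ∈ I := by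
  let ι : K ≃ₐ[K] A ⧸ I :=
    .ofBijective (Algebra.ofId K _) IsAlgClosed.algebraMap_bijective_of_isIntegral
  refine ⟨ι.symm.toAlgHom.comp (Ideal.Quotient.mkₐ K I), fun x ↦ ?_⟩
  rw [← Ideal.Quotient.eq, ← Ideal.Quotient.mkₐ_eq_mk K, AlgHom.commutes]
  exact (ι.apply_symm_apply _).symm

theorem span_idempotent_common_eigenvectors_eq_top {K A : Type*} [Field K] [IsAlgClosed K]
    [CommRing A] [Algebra K A] [FiniteDimensional K A] [IsReduced A] :
    Submodule.span K {e : A | IsIdempotentElem e ∧ e ≠ 0 ∧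
      ∃ χ : A →ₗ[K] K, ∀ x, x * e = χ x • e} = ⊤ := by
  classical
  set S := {e : A | IsIdempotentElem e ∧ e ≠ 0 ∧ ∃ χ : A →ₗ[K] K, ∀ x, x * e = χ x • e}
  have := IsArtinianRing.of_finite K A
  have : Fintype (MaximalSpectrum A) := .ofFinite _
  let Φ := IsArtinianRing.equivPi A
  let e : MaximalSpectrum A → A := fun I ↦ Φ.symm (Pi.single I 1)
  have he : ∀ I, e I ∈ S := by
    intro I
    have := I.isMaximal
    obtain ⟨χ, hχ⟩ := exists_algHom_sub_algebraMap_mem (K := K) I.asIdeal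
    refine ⟨?_, ?_, χ.toLinearMap, fun x ↦ Φ.injective (funext fun J ↦ ?_)⟩
    · rw [IsIdempotentElem, ← map_mul, ← Pi.single_mul, one_mul]
    · simp [e]
    · rw [Algebra.smul_def, map_mul, map_mul]
      simp only [Pi.mul_apply, IsArtinianRing.equivPi_apply, e, AlgEquiv.apply_symm_apply, Φ]
      rcases eq_or_ne J I with rfl | hJ
      · rw [Ideal.Quotient.eq.mpr (hχ x)]; rfl
      · simp [Pi.single_eq_of_ne hJ]
  have hsum : ∑ I, e I = 1 := by
    rw [← map_sum, Finset.univ_sum_single]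
    exact map_one Φ.symm
  refine eq_top_iff.mpr fun x _ ↦ ?_
  rw [← mul_one x, ← hsum, Finset.mul_sum]
  refine Submodule.sum_mem _ fun I _ ↦ ?_
  obtain ⟨χ, hχ⟩ := (he I).2.2
  rw [hχ]
  exact Submodule.smul_mem _ _ (Submodule.subset_span (he I))

structure IsLeftSpecialFrobenius {K A : Type*} [Field K] [CommRing A] [Algebra K A]
    (δ : A →ₗ[K] A ⊗[K] A) (ε : A →ₗ[K] K) : Prop where
  comul_mul : ∀ x y, δ (x * y) = (mulLeft K x).rTensor A (δ y)
  lid_rTensor_counit_comul : ∀ x, TensorProduct.lid K A (ε.rTensor A (δ x)) = x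
  mul'_comul : ∀ x, mul' K A (δ x) = x

namespace IsLeftSpecialFrobenius

variable {K A : Type*} [Field K] [CommRing A] [Algebra K A]
  {δ : A →ₗ[K] A ⊗[K] A} {ε : A →ₗ[K] K}

theorem mul_eq_counit_smul_of_comul_eq (h : IsLeftSpecialFrobenius δ ε) {ψ : A}
    (hψ : δ ψ = ψ ⊗ₜ ψ) (x : A) : x * ψ = ε (x * ψ) • ψ := by
  have := h.lid_rTensor_counit_comul (x * ψ)
  rwa [h.comul_mul, hψ, rTensor_tmul, rTensor_tmul, mulLeft_apply, lid_tmul, eq_comm] at this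

theorem mul_eq_zero_of_comul_eq (h : IsLeftSpecialFrobenius δ ε) {ψ φ : A}
    (hψ : δ ψ = ψ ⊗ₜ ψ) (hφ : δ φ = φ ⊗ₜ φ) (hne : ψ ≠ φ) : ψ * φ = 0 := by
  have hψφ := h.mul_eq_counit_smul_of_comul_eq hφ ψ
  have hφψ := h.mul_eq_counit_smul_of_comul_eq hψ φ
  rw [mul_comm φ] at hφψ
  by_contra hne0
  have hc : ε (ψ * φ) ≠ 0 := fun hc ↦ hne0 (by rw [hψφ, hc, zero_smul])
  exact hne (smul_right_injective A hc (hφψ.symm.trans hψφ))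

theorem isIdempotentElem_of_comul_eq (h : IsLeftSpecialFrobenius δ ε) {ψ : A}
    (hψ : δ ψ = ψ ⊗ₜ ψ) : IsIdempotentElem ψ := by
  rw [IsIdempotentElem, ← mul'_apply (R := K), ← hψ, h.mul'_comul]

theorem linearIndependent_copyable (h : IsLeftSpecialFrobenius δ ε) :
    LinearIndependent K ((↑) : {ψ : A // δ ψ = ψ ⊗ₜ[K] ψ ∧ ε ψ = 1} → A) := by
  refine linearIndependent_iff'.mpr fun s c hs i hi ↦ ?_
  have hortho : ∀ j ∈ s, j ≠ i → ε ((c j • (j : A)) * i) = 0 := fun j _ hj ↦ by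
    rw [smul_mul_assoc, h.mul_eq_zero_of_comul_eq j.2.1 i.2.1 (Subtype.coe_ne_coe.mpr hj),
      smul_zero, map_zero]
  calc c i = ε ((c i • (i : A)) * i) := by
        rw [smul_mul_assoc, (h.isIdempotentElem_of_comul_eq i.2.1).eq, map_smul, i.2.2,
          smul_eq_mul, mul_one]
    _ = ε ((∑ j ∈ s, c j • (j : A)) * i) := by
        rw [Finset.sum_mul, map_sum, Finset.sum_eq_single_of_mem i hi hortho]
    _ = 0 := by rw [hs, zero_mul, map_zero]

theorem eq_zero_of_forall_counit_mul_eq_zero (h : IsLeftSpecialFrobenius δ ε) {x : A}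
    (hx : ∀ y, ε (x * y) = 0) : x = 0 := by
  have hεx : ε ∘ₗ mulLeft K x = 0 := LinearMap.ext hx
  rw [← h.lid_rTensor_counit_comul x, ← mul_one x, h.comul_mul, ← rTensor_comp_apply, hεx,
    rTensor_zero, LinearMap.zero_apply, map_zero]

theorem trace_eq_counit [FiniteDimensional K A] (h : IsLeftSpecialFrobenius δ ε) (x : A) :
    Algebra.trace K A x = ε x := by
  -- With `δ x = ∑ aᵢ ⊗ bᵢ`, the counit law gives `x * z = ∑ ε (aᵢ * z) • bᵢ`, so the trace of
  -- `x * ·` is `∑ ε (aᵢ * bᵢ) = ε (m (δ x)) = ε x`.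
  let β : A →ₗ[K] Module.Dual K A := (LinearMap.mul K A).compr₂ ε
  have hmulLeft : mulLeft K x = dualTensorHom K A A (β.rTensor A (δ x)) := by
    ext z
    have hz : ∀ t, dualTensorHom K A A (β.rTensor A t) z
        = TensorProduct.lid K A (ε.rTensor A ((mulLeft K z).rTensor A t)) := fun t ↦ by
      induction t using TensorProduct.induction_on with
      | zero => simp
      | tmul a b => simp [β, mul_comm]
      | add s t hs ht => simp [hs, ht]
    rw [hz, ← h.comul_mul, h.lid_rTensor_counit_comul, mulLeft_apply, mul_comm]
  have hcontract : ∀ t, contractLeft K A (β.rTensor A t) = ε (mul' K A t) := fun t ↦ by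
    induction t using TensorProduct.induction_on with
    | zero => simp
    | tmul a b => simp [β]
    | add s t hs ht => simp [hs, ht]
  rw [Algebra.trace_apply, Algebra.coe_lmul_eq_mul]
  change trace K A (mulLeft K x) = ε x
  rw [hmulLeft, trace_eq_contract_apply, hcontract, h.mul'_comul]

theorem isReduced [FiniteDimensional K A] (h : IsLeftSpecialFrobenius δ ε) : IsReduced A where
  eq_zero x hx := h.eq_zero_of_forall_counit_mul_eq_zero fun y ↦ by
    rw [← h.trace_eq_counit]
    exact (Algebra.isNilpotent_trace_of_isNilpotent
      ((Commute.all x y).isNilpotent_mul_right hx)).eq_zero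

theorem copyable_of_mul_eq_smul (h : IsLeftSpecialFrobenius δ ε) {e : A}
    (he : IsIdempotentElem e) (he0 : e ≠ 0) {χ : A →ₗ[K] K} (hχ : ∀ x, x * e = χ x • e) :
    δ e = e ⊗ₜ e ∧ ε e = 1 := by
  have hrTensor : ∀ t, (mulLeft K e).rTensor A t = e ⊗ₜ TensorProduct.lid K A (χ.rTensor A t) :=
    fun t ↦ by
      induction t using TensorProduct.induction_on with
      | zero => simp
      | tmul a b => simp [mul_comm e, hχ, smul_tmul]
      | add s t hs ht => simp [hs, ht, tmul_add]
  set w := TensorProduct.lid K A (χ.rTensor A (δ e))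
  have hδ : δ e = e ⊗ₜ w := by rw [← hrTensor, ← h.comul_mul, he.eq]
  have hεw : ε e • w = e := by simpa [hδ] using h.lid_rTensor_counit_comul e
  have hew : e * w = e := by simpa [hδ] using h.mul'_comul e
  have hεe : ε e = 1 := smul_left_injective K he0 <| show ε e • e = (1 : K) • e from
    calc ε e • e = e * (ε e • w) := by rw [mul_smul_comm, hew]
      _ = (1 : K) • e := by rw [hεw, he.eq, one_smul]
  rw [hεe, one_smul] at hεw
  exact ⟨hεw ▸ hδ, hεe⟩

theorem span_copyable_eq_top [IsAlgClosed K] [FiniteDimensional K A]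
    (h : IsLeftSpecialFrobenius δ ε) :
    Submodule.span K {ψ : A | δ ψ = ψ ⊗ₜ[K] ψ ∧ ε ψ = 1} = ⊤ := by
  have := h.isReduced
  rw [eq_top_iff, ← span_idempotent_common_eigenvectors_eq_top (K := K)]
  refine Submodule.span_mono ?_
  rintro e ⟨he, he0, χ, hχ⟩
  exact h.copyable_of_mul_eq_smul he he0 hχ

end IsLeftSpecialFrobenius

abbrev commRingOfMul {R V : Type*} [CommSemiring R] [AddCommGroup V] [Module R V]
    (m : V ⊗[R] V →ₗ[R] V) (one : V)
    (hassoc : m ∘ₗ TensorProduct.map m LinearMap.id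
      = m ∘ₗ TensorProduct.map LinearMap.id m ∘ₗ (TensorProduct.assoc R V V V).toLinearMap)
    (hcomm : m ∘ₗ (TensorProduct.comm R V V).toLinearMap = m)
    (hone : ∀ x, m (one ⊗ₜ x) = x) : CommRing V where
  mul x y := m (x ⊗ₜ y)
  one := one
  left_distrib x y z := show m (x ⊗ₜ (y + z)) = m (x ⊗ₜ y) + m (x ⊗ₜ z) by
    rw [tmul_add, map_add]
  right_distrib x y z := show m ((x + y) ⊗ₜ z) = m (x ⊗ₜ z) + m (y ⊗ₜ z) by
    rw [add_tmul, map_add]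
  zero_mul x := show m (0 ⊗ₜ x) = 0 by rw [zero_tmul, map_zero]
  mul_zero x := show m (x ⊗ₜ 0) = 0 by rw [tmul_zero, map_zero]
  mul_assoc x y z := show m (m (x ⊗ₜ y) ⊗ₜ z) = m (x ⊗ₜ m (y ⊗ₜ z)) by
    simpa using LinearMap.congr_fun hassoc ((x ⊗ₜ y) ⊗ₜ z)
  one_mul := hone
  mul_one x := (LinearMap.congr_fun hcomm (x ⊗ₜ one)).symm.trans (hone x)
  mul_comm x y := LinearMap.congr_fun hcomm (y ⊗ₜ x)

theorem rTensor_mulLeft_eq_map_mul'_assoc_symm {R A : Type*} [CommSemiring R]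
    [NonUnitalNonAssocSemiring A] [Module R A] [SMulCommClass R A A] [IsScalarTower R A A]
    (x : A) (t : A ⊗[R] A) :
    (mulLeft R x).rTensor A t
      = map (mul' R A) id ((TensorProduct.assoc R A A A).symm (x ⊗ₜ t)) := by
  induction t using TensorProduct.induction_on with
  | zero => simp
  | tmul a b => simp
  | add s t hs ht => simp [hs, ht, tmul_add]

theorem copyable_basis_of_special_frobenius_general
    {V : Type*} [AddCommGroup V] [Module ℂ V] [FiniteDimensional ℂ V]
    (m : V ⊗[ℂ] V →ₗ[ℂ] V) (u : ℂ →ₗ[ℂ] V) (δ : V →ₗ[ℂ] V ⊗[ℂ] V) (ε : V →ₗ[ℂ] ℂ)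
    (hassoc : m ∘ₗ TensorProduct.map m LinearMap.id
      = m ∘ₗ TensorProduct.map LinearMap.id m ∘ₗ (TensorProduct.assoc ℂ V V V).toLinearMap)
    (hcomm : m ∘ₗ (TensorProduct.comm ℂ V V).toLinearMap = m)
    (hunitl : ∀ x : V, m (u 1 ⊗ₜ[ℂ] x) = x)
    (hcounitl : (TensorProduct.lid ℂ V).toLinearMap
        ∘ₗ TensorProduct.map ε LinearMap.id ∘ₗ δ = LinearMap.id)
    (hfrob1 : TensorProduct.map m LinearMap.id
        ∘ₗ (TensorProduct.assoc ℂ V V V).symm.toLinearMap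
        ∘ₗ TensorProduct.map LinearMap.id δ = δ ∘ₗ m)
    (hspecial : m ∘ₗ δ = LinearMap.id) :
    LinearIndependent ℂ ((↑) : {ψ : V // δ ψ = ψ ⊗ₜ[ℂ] ψ ∧ ε ψ = 1} → V)
      ∧ Submodule.span ℂ {ψ : V | δ ψ = ψ ⊗ₜ[ℂ] ψ ∧ ε ψ = 1} = ⊤ := by
  let := commRingOfMul m (u 1) hassoc hcomm hunitl
  let : Algebra ℂ V := Algebra.ofModule
    (fun r x y ↦ show m ((r • x) ⊗ₜ y) = r • m (x ⊗ₜ y) by rw [← smul_tmul', map_smul])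
    (fun r x y ↦ show m (x ⊗ₜ (r • y)) = r • m (x ⊗ₜ y) by rw [tmul_smul, map_smul])
  have hm : mul' ℂ V = m := TensorProduct.ext' fun _ _ ↦ rfl
  rw [← hm] at hfrob1 hspecial
  have hF : IsLeftSpecialFrobenius δ ε :=
    { comul_mul x y := by
        rw [rTensor_mulLeft_eq_map_mul'_assoc_symm]
        exact (LinearMap.congr_fun hfrob1 (x ⊗ₜ y)).symm
      lid_rTensor_counit_comul := LinearMap.congr_fun hcounitl
      mul'_comul := LinearMap.congr_fun hspecial }
  exact ⟨hF.linearIndependent_copyable, hF.span_copyable_eq_top⟩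

/-- For a commutative special Frobenius algebra on a finite-dimensional complex vector
space `V` (no inner product involved), the copyable elements form a basis of `V`. -/
theorem copyable_basis_of_special_frobenius
    {V : Type*} [AddCommGroup V] [Module ℂ V] [FiniteDimensional ℂ V]
    (m : V ⊗[ℂ] V →ₗ[ℂ] V) (u : ℂ →ₗ[ℂ] V) (δ : V →ₗ[ℂ] V ⊗[ℂ] V) (ε : V →ₗ[ℂ] ℂ)
    (hassoc : m ∘ₗ TensorProduct.map m LinearMap.id
      = m ∘ₗ TensorProduct.map LinearMap.id m ∘ₗ (TensorProduct.assoc ℂ V V V).toLinearMap)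
    (hcomm : m ∘ₗ (TensorProduct.comm ℂ V V).toLinearMap = m)
    (hunitl : ∀ x : V, m (u 1 ⊗ₜ[ℂ] x) = x)
    (hunitr : ∀ x : V, m (x ⊗ₜ[ℂ] u 1) = x)
    (hcoassoc : (TensorProduct.assoc ℂ V V V).toLinearMap
        ∘ₗ TensorProduct.map δ LinearMap.id ∘ₗ δ
      = TensorProduct.map LinearMap.id δ ∘ₗ δ)
    (hcounitl : (TensorProduct.lid ℂ V).toLinearMap
        ∘ₗ TensorProduct.map ε LinearMap.id ∘ₗ δ = LinearMap.id)
    (hcounitr : (TensorProduct.rid ℂ V).toLinearMap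
        ∘ₗ TensorProduct.map LinearMap.id ε ∘ₗ δ = LinearMap.id)
    (hfrob1 : TensorProduct.map m LinearMap.id
        ∘ₗ (TensorProduct.assoc ℂ V V V).symm.toLinearMap
        ∘ₗ TensorProduct.map LinearMap.id δ = δ ∘ₗ m)
    (hfrob2 : TensorProduct.map LinearMap.id m
        ∘ₗ (TensorProduct.assoc ℂ V V V).toLinearMap
        ∘ₗ TensorProduct.map δ LinearMap.id = δ ∘ₗ m)
    (hspecial : m ∘ₗ δ = LinearMap.id) :
    LinearIndependent ℂ ((↑) : {ψ : V // δ ψ = ψ ⊗ₜ[ℂ] ψ ∧ ε ψ = 1} → V)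
      ∧ Submodule.span ℂ {ψ : V | δ ψ = ψ ⊗ₜ[ℂ] ψ ∧ ε ψ = 1} = ⊤ :=
  copyable_basis_of_special_frobenius_general m u δ ε hassoc hcomm hunitl hcounitl hfrob1 hspecial
end
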